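/- arXiv:1507.07142 — 3 statements merged into one kernel-verified Lean document; each statement's English description precedes it below -/
import Mathlib

section
/- Let à = [ã_ij] be an m×m real matrix with ã_ij ≥ 0 for all i ≠ j and with all row sums negative, i.e., Σ_{j=1}^m ã_ij < 0 for every i. Let v : [0,∞) → ℝ^m be differentiable with v_i(t) ≥ 0 for all i and all t ≥ 0, satisfying v'(t) ≤ à v(t) componentwise for all t ≥ 0. Define V_i(t) := v_i(t)² and the matrix A = [a_ij] by a_ii := ã_ii + Σ_{j=1}^m ã_ij and a_ij := ã_ij for j ≠ i. Then: (1) V'(t) ≤ A V(t) componentwise for all t ≥ 0; (2) a_ij ≥ 0 for all i ≠ j; and (3) Σ_{j=1}^m a_ij = 2 Σ_{j=1}^m ã_ij < Σ_{j=1}^m ã_ij < 0 for every i. -/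
/-!
Write `A = Ã + diag(∑_j ã_ij)`. Differentiating `V i = (v i)²` and using `v i ≥ 0` gives
`V' i = 2 v_i v'_i ≤ ∑_j ã_ij (2 v_i v_j)`. The diagonal term is `ã_ii (v_i² + v_i²)`, and for
`j ≠ i` the bound `2 v_i v_j ≤ v_i² + v_j²` may be applied because `ã_ij ≥ 0`; the result is
`∑_j ã_ij (V_j + V_i) = (A V)_i`.
-/

open Matrix Finset

namespace Matrix

variable {n : Type*}

def IsMetzler (M : Matrix n n ℝ) : Prop :=
  Pairwise fun i j => 0 ≤ M i j

variable [DecidableEq n]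

theorem IsMetzler.add_diagonal {M : Matrix n n ℝ} (hM : M.IsMetzler) (d : n → ℝ) :
    (M + diagonal d).IsMetzler := fun i j hij => by
  simpa [diagonal_apply_ne d hij] using hM hij

variable [Fintype n]

theorem add_diagonal_sum_mulVec_apply (M : Matrix n n ℝ) (y : n → ℝ) (i : n) :
    ((M + diagonal fun k => ∑ j, M k j) *ᵥ y) i = ∑ j, M i j * (y j + y i) := by
  rw [add_mulVec, Pi.add_apply, mulVec_diagonal]
  simp only [mulVec, dotProduct, mul_add, sum_add_distrib, sum_mul]

theorem sum_add_diagonal_sum_apply (M : Matrix n n ℝ) (i : n) :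
    ∑ j, (M + diagonal fun k => ∑ j, M k j) i j = 2 * ∑ j, M i j := by
  simp only [add_apply, sum_add_distrib, diagonal_apply, sum_ite_eq, mem_univ, if_true]
  ring

theorem IsMetzler.two_mul_mul_mulVec_le {M : Matrix n n ℝ} (hM : M.IsMetzler) (x : n → ℝ)
    (i : n) :
    2 * x i * (M *ᵥ x) i ≤ ((M + diagonal fun k => ∑ j, M k j) *ᵥ fun j => x j ^ 2) i := by
  rw [add_diagonal_sum_mulVec_apply, mulVec, dotProduct, mul_sum]
  refine sum_le_sum fun j _ => ?_
  rcases eq_or_ne i j with rfl | hij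
  · exact le_of_eq (by ring)
  · nlinarith [hM hij, mul_nonneg (hM hij) (sq_nonneg (x i - x j))]

end Matrix

theorem hasDerivAt_sq_apply {ι : Type*} [Fintype ι] {v : ℝ → ι → ℝ} {v' : ι → ℝ} {t : ℝ}
    (hv : HasDerivAt v v' t) (i : ι) :
    HasDerivAt (fun s => v s i ^ 2) (2 * v t i * v' i) t := by
  simpa using (hasDerivAt_pi.mp hv i).fun_pow 2

/-- **Lemma 2 of the paper.** If nonnegative functions `v i` satisfy the linear
comparison inequality `v' ≤ Ã v` with a Metzler matrix `Ã` having negative row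
sums, then the squares `V i = (v i)²` satisfy the comparison inequality
`V' ≤ A V` with the matrix `A` given by `a_ii = ã_ii + ∑_j ã_ij`,
`a_ij = ã_ij (j ≠ i)`, which is again Metzler and has row sums
`∑_j a_ij = 2 ∑_j ã_ij < ∑_j ã_ij < 0`. -/
theorem squared_comparison {m : ℕ} (Atil : Matrix (Fin m) (Fin m) ℝ)
    (hAtil : ∀ i j, i ≠ j → 0 ≤ Atil i j)
    (hrow : ∀ i, ∑ j, Atil i j < 0)
    (v v' : ℝ → Fin m → ℝ)
    (hv : ∀ t ≥ (0 : ℝ), HasDerivAt v (v' t) t)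
    (hpos : ∀ t ≥ (0 : ℝ), ∀ i, 0 ≤ v t i)
    (hcomp : ∀ t ≥ (0 : ℝ), ∀ i, v' t i ≤ Atil.mulVec (v t) i)
    (A : Matrix (Fin m) (Fin m) ℝ)
    (hAdef : ∀ i j, A i j = if j = i then Atil i i + ∑ k, Atil i k else Atil i j) :
    (∀ t ≥ (0 : ℝ), ∀ i,
        deriv (fun s => (v s i) ^ 2) t ≤ A.mulVec (fun j => (v t j) ^ 2) i) ∧
    (∀ i j, i ≠ j → 0 ≤ A i j) ∧
    (∀ i, ∑ j, A i j = 2 * ∑ j, Atil i j ∧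
        2 * ∑ j, Atil i j < ∑ j, Atil i j ∧ ∑ j, Atil i j < 0) := by
  have hA : A = Atil + diagonal fun k => ∑ j, Atil k j := by
    ext i j
    rcases eq_or_ne j i with rfl | hji
    · simp [hAdef]
    · simp [hAdef, hji, hji.symm]
  have hM : Atil.IsMetzler := hAtil
  subst hA
  refine ⟨fun t ht i => ?_, hM.add_diagonal _, fun i => ?_⟩
  · rw [(hasDerivAt_sq_apply (hv t ht) i).deriv]
    calc 2 * v t i * v' t i ≤ 2 * v t i * (Atil *ᵥ v t) i :=
          mul_le_mul_of_nonneg_left (hcomp t ht i) (by linarith [hpos t ht i])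
      _ ≤ _ := hM.two_mul_mul_mulVec_le (v t) i
  · rw [sum_add_diagonal_sum_apply]
    exact ⟨rfl, by linarith [hrow i], hrow i⟩
end

section
/- Let A = [a_ij] be an m×m real matrix with nonnegative off-diagonal entries and such that every eigenvalue of A (as a complex matrix) has strictly negative real part. Let v : [0,∞) → ℝ^m be differentiable with v_i(t) ≥ 0 for all i and t ≥ 0, and v'(t) ≤ A v(t) componentwise for all t ≥ 0. Then there exist constants b > 0 and c > 0 such that ‖v(t)‖₂ ≤ c e^{−bt} ‖v(0)‖₂ for all t ≥ 0. -/
/-!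
Since `A` is Metzler, `P = 1 + t • A` is entrywise nonnegative for small `t > 0`; since `A` is
Hurwitz, the spectrum `1 + t σ(A)` of `P` then lies in the open unit disc, so by Gelfand's formula
the Neumann series `S = ∑ Pᵏ` converges, `S` is entrywise nonnegative and `S * (1 - P) = 1`.
The row vector `w = 𝟙ᵀ S` has entries `≥ 1` and satisfies `w A = -t⁻¹ 𝟙`, hence `w A ≤ -γ w` for
some `γ > 0`. Along `v ≥ 0` the linear Lyapunov function `V = w ⬝ v` therefore satisfies
`V' ≤ -γ V`, so `V` decays like `exp (-γ t)` by Grönwall, and on the nonnegative orthant `V`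
is comparable to the Euclidean norm.
-/

open Filter Topology Matrix
open scoped NNReal

section BanachAlgebra

variable {A : Type*} [NormedRing A] [NormedAlgebra ℂ A] [CompleteSpace A]

theorem spectrum.eventually_norm_pow_le_of_spectralRadius_lt {a : A} {r : ℝ≥0}
    (h : spectralRadius ℂ a < r) : ∀ᶠ k in atTop, ‖a ^ k‖ ≤ r ^ k := by
  filter_upwards [(pow_norm_pow_one_div_tendsto_nhds_spectralRadius a).eventually_lt_const h,
    eventually_ne_atTop 0] with k hk hk0
  rw [ENNReal.ofReal_lt_coe_iff (by positivity), one_div] at hk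
  calc ‖a ^ k‖ = (‖a ^ k‖ ^ (k : ℝ)⁻¹) ^ k := (Real.rpow_inv_natCast_pow (norm_nonneg _) hk0).symm
    _ ≤ r ^ k := by gcongr

theorem summable_pow_of_forall_norm_lt_one {a : A} (h : ∀ μ ∈ spectrum ℂ a, ‖μ‖ < 1) :
    Summable (a ^ ·) := by
  have hρ : spectralRadius ℂ a < (1 : ℝ≥0) := by
    rcases (spectrum ℂ a).eq_empty_or_nonempty with he | hne
    · simp [spectralRadius, he]
    · exact spectrum.spectralRadius_lt_of_forall_lt_of_nonempty hne fun μ hμ => by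
        simpa [← NNReal.coe_lt_coe] using h μ hμ
  obtain ⟨r, hρr, hr1⟩ := ENNReal.lt_iff_exists_nnreal_btwn.mp hρ
  exact Summable.of_norm_bounded_eventually_nat
    (summable_geometric_of_lt_one r.2 (by exact_mod_cast hr1))
    (spectrum.eventually_norm_pow_le_of_spectralRadius_lt hρr)

end BanachAlgebra

theorem IsCompact.eventually_forall_norm_one_add_mul_lt_one {K : Set ℂ} (hK : IsCompact K)
    (hre : ∀ μ ∈ K, μ.re < 0) : ∀ᶠ t : ℝ in 𝓝[>] 0, ∀ μ ∈ K, ‖1 + t * μ‖ < 1 := by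
  rcases K.eq_empty_or_nonempty with rfl | hne
  · simp
  obtain ⟨μ₀, hμ₀, hmax⟩ := hK.exists_isMaxOn hne Complex.continuous_re.continuousOn
  obtain ⟨R, hR⟩ := hK.isBounded.exists_norm_le
  set δ := -μ₀.re
  have hδ : 0 < δ := neg_pos.mpr (hre μ₀ hμ₀)
  filter_upwards [Ioo_mem_nhdsGT (by positivity : 0 < 2 * δ / (R ^ 2 + 1))] with t ⟨ht0, ht⟩ μ hμ
  have hre_le : μ.re ≤ -δ := by simpa [δ] using hmax hμ
  have hnorm : ‖μ‖ ^ 2 ≤ R ^ 2 := pow_le_pow_left₀ (norm_nonneg μ) (hR μ hμ) 2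
  have htR : t * (R ^ 2 + 1) < 2 * δ := (lt_div_iff₀ (by positivity)).mp ht
  have hsq : ‖1 + (t : ℂ) * μ‖ ^ 2 = 1 + 2 * t * μ.re + t ^ 2 * ‖μ‖ ^ 2 := by
    rw [Complex.sq_norm, Complex.sq_norm, Complex.normSq_apply, Complex.normSq_apply]
    simp only [Complex.add_re, Complex.add_im, Complex.mul_re, Complex.mul_im,
      Complex.ofReal_re, Complex.ofReal_im, Complex.one_re, Complex.one_im]
    ring
  have : ‖1 + (t : ℂ) * μ‖ ^ 2 < 1 ^ 2 := by
    rw [hsq]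
    nlinarith [mul_le_mul_of_nonneg_left hnorm (sq_nonneg t)]
  exact lt_of_pow_lt_pow_left₀ 2 zero_le_one this

namespace Matrix

variable {n : Type*} [Fintype n] [DecidableEq n]

theorem eventually_nonneg_one_add_smul {A : Matrix n n ℝ} (hA : ∀ i j, i ≠ j → 0 ≤ A i j) :
    ∀ᶠ t : ℝ in 𝓝[>] 0, ∀ i j, 0 ≤ (1 + t • A) i j := by
  have hdiag : ∀ i, ∀ᶠ t : ℝ in 𝓝 0, 0 ≤ 1 + t * A i i := fun i =>
    ((continuous_const.add (continuous_id.mul continuous_const)).tendsto' 0 1 (by simp)).eventually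
      (eventually_ge_nhds zero_lt_one)
  filter_upwards [nhdsWithin_le_nhds (eventually_all.mpr hdiag), self_mem_nhdsWithin]
    with t hdiag ht i j
  rcases eq_or_ne i j with rfl | hij
  · simpa using hdiag i
  · simpa [one_apply_ne hij] using mul_nonneg (le_of_lt ht) (hA i j hij)

theorem spectrum_map_ofReal_one_add_smul (A : Matrix n n ℝ) {t : ℝ} (ht : t ≠ 0) :
    spectrum ℂ ((1 + t • A).map (Complex.ofReal ·)) =
      (1 + (t : ℂ) * ·) '' spectrum ℂ (A.map (Complex.ofReal ·)) := by
  have : (1 + t • A).map (Complex.ofReal ·) =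
      algebraMap ℂ _ 1 + (Units.mk0 (t : ℂ) (by exact_mod_cast ht)) • A.map (Complex.ofReal ·) := by
    ext i j
    rcases eq_or_ne i j with rfl | hij <;> simp [*]
  rw [this, ← spectrum.singleton_add_eq, spectrum.unit_smul_eq_smul, Set.singleton_add,
    ← Set.image_smul, Set.image_image]
  rfl

section LinftyOpNorm

-- Gelfand's formula needs a Banach algebra norm on complex matrices; any one will do.
attribute [local instance] Matrix.linftyOpNormedRing Matrix.linftyOpNormedAlgebra

theorem summable_pow_of_forall_norm_lt_one {P : Matrix n n ℝ}
    (h : ∀ μ ∈ spectrum ℂ (P.map (Complex.ofReal ·)), ‖μ‖ < 1) : Summable (P ^ ·) := by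
  have := (_root_.summable_pow_of_forall_norm_lt_one h).map
    (Complex.reLm.mapMatrix : Matrix n n ℂ →ₗ[ℝ] Matrix n n ℝ)
    (continuous_id.matrix_map Complex.continuous_re)
  convert this using 2 with k
  have hpow : (P.map (Complex.ofReal ·)) ^ k = (P ^ k).map (Complex.ofReal ·) :=
    (map_pow Complex.ofRealHom.mapMatrix P k).symm
  ext i j
  simp [hpow]

end LinftyOpNorm

theorem exists_one_le_vecMul_one_sub_eq_one {P : Matrix n n ℝ} (hP : ∀ i j, 0 ≤ P i j)
    (hsum : Summable (P ^ ·)) : ∃ w : n → ℝ, (∀ i, 1 ≤ w i) ∧ w ᵥ* (1 - P) = 1 := by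
  set S := ∑' k, P ^ k
  have hS : ∀ i j, HasSum (fun k => (P ^ k) i j) (S i j) := fun i j =>
    Pi.hasSum.mp (Pi.hasSum.mp hsum.hasSum i) j
  have hS_nonneg : ∀ i j, 0 ≤ S i j := fun i j =>
    (hS i j).nonneg fun k => pow_apply_nonneg hP k i j
  refine ⟨1 ᵥ* S, fun j => ?_, by rw [vecMul_vecMul, hsum.tsum_pow_mul_one_sub, vecMul_one]⟩
  calc (1 : ℝ) = (P ^ 0) j j := by simp
    _ ≤ S j j := le_hasSum (hS j j) 0 fun k _ => pow_apply_nonneg hP k j j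
    _ ≤ ∑ i, S i j := Finset.single_le_sum (fun i _ => hS_nonneg i j) (Finset.mem_univ j)
    _ = (1 ᵥ* S) j := by simp [vecMul, dotProduct]

theorem exists_one_le_vecMul_le_neg_smul {A : Matrix n n ℝ} (hMetzler : ∀ i j, i ≠ j → 0 ≤ A i j)
    (hHurwitz : ∀ μ ∈ spectrum ℂ (A.map (Complex.ofReal ·)), μ.re < 0) :
    ∃ w : n → ℝ, (∀ i, 1 ≤ w i) ∧ ∃ γ > (0 : ℝ), w ᵥ* A ≤ -γ • w := by
  obtain ⟨t, ⟨hP, hball⟩, ht⟩ := ((eventually_nonneg_one_add_smul hMetzler).and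
    ((A.map _).finite_spectrum.isCompact.eventually_forall_norm_one_add_mul_lt_one hHurwitz)
    |>.and self_mem_nhdsWithin).exists
  have hsum : Summable ((1 + t • A) ^ ·) := by
    refine summable_pow_of_forall_norm_lt_one ?_
    rw [spectrum_map_ofReal_one_add_smul A (ne_of_gt ht)]
    rintro _ ⟨μ, hμ, rfl⟩
    exact hball μ hμ
  obtain ⟨w, hw1, hw⟩ := exists_one_le_vecMul_one_sub_eq_one hP hsum
  have hwA : ∀ j, (w ᵥ* A) j = -t⁻¹ := by
    intro j
    have h := congrFun hw j
    simp only [sub_add_cancel_left, vecMul_neg, vecMul_smul, Pi.neg_apply, Pi.smul_apply,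
      smul_eq_mul, Pi.one_apply] at h
    field_simp
    linarith
  obtain ⟨C, hC⟩ := Finite.exists_le w
  have hC1 : 0 < max C 1 := lt_max_of_lt_right one_pos
  refine ⟨w, hw1, t⁻¹ / max C 1, by positivity, fun j => ?_⟩
  have : t⁻¹ / max C 1 * w j ≤ t⁻¹ := by
    rw [div_mul_eq_mul_div, div_le_iff₀ hC1]
    exact mul_le_mul_of_nonneg_left ((hC j).trans (le_max_left _ _)) (by positivity)
  simp only [hwA, Pi.smul_apply, smul_eq_mul]
  linarith

end Matrix

theorem le_mul_exp_of_hasDerivAt_le_mul {V V' : ℝ → ℝ} {K : ℝ}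
    (hV : ∀ t ≥ (0 : ℝ), HasDerivAt V (V' t) t) (hle : ∀ t ≥ (0 : ℝ), V' t ≤ K * V t)
    {t : ℝ} (ht : 0 ≤ t) : V t ≤ V 0 * Real.exp (K * t) := by
  have := le_gronwallBound_of_liminf_deriv_right_le (ε := 0)
    (fun x hx => (hV x hx.1).continuousAt.continuousWithinAt)
    (fun x hx r hr => (hV x hx.1).hasDerivWithinAt.liminf_right_slope_le hr) le_rfl
    (fun x hx => by simpa using hle x hx.1) t ⟨ht, le_rfl⟩
  simpa [gronwallBound_ε0] using this

theorem Matrix.dotProduct_le_mul_exp_of_vecMul_le_neg_smul {n : Type*} [Fintype n]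
    {A : Matrix n n ℝ} {w : n → ℝ} {γ : ℝ} (hw : 0 ≤ w) (hwA : w ᵥ* A ≤ -γ • w)
    {v v' : ℝ → n → ℝ} (hv : ∀ t ≥ (0 : ℝ), HasDerivAt v (v' t) t)
    (hpos : ∀ t ≥ (0 : ℝ), 0 ≤ v t) (hcomp : ∀ t ≥ (0 : ℝ), v' t ≤ A *ᵥ v t)
    {t : ℝ} (ht : 0 ≤ t) : w ⬝ᵥ v t ≤ w ⬝ᵥ v 0 * Real.exp (-γ * t) := by
  refine le_mul_exp_of_hasDerivAt_le_mul (V := fun t => w ⬝ᵥ v t) (V' := fun t => w ⬝ᵥ v' t)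
    (fun t ht => ?_) (fun t ht => ?_) ht
  · simpa only [dotProduct] using
      HasDerivAt.fun_sum fun i _ => (hasDerivAt_pi.mp (hv t ht) i).const_mul (w i)
  · calc w ⬝ᵥ v' t ≤ w ⬝ᵥ (A *ᵥ v t) := dotProduct_le_dotProduct_of_nonneg_left (hcomp t ht) hw
      _ = (w ᵥ* A) ⬝ᵥ v t := dotProduct_mulVec _ _ _
      _ ≤ (-γ • w) ⬝ᵥ v t := dotProduct_le_dotProduct_of_nonneg_right hwA (hpos t ht)
      _ = -γ * (w ⬝ᵥ v t) := smul_dotProduct _ _ _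

theorem Real.sqrt_sum_sq_le_sum {ι : Type*} (s : Finset ι) {f : ι → ℝ} (hf : ∀ i ∈ s, 0 ≤ f i) :
    √(∑ i ∈ s, f i ^ 2) ≤ ∑ i ∈ s, f i :=
  Real.sqrt_le_iff.mpr ⟨Finset.sum_nonneg hf, Finset.sum_sq_le_sq_sum_of_nonneg hf⟩

/-- The paper's conclusion (20): if the comparison matrix `A` is Metzler
(nonnegative off-diagonal entries) and Hurwitz (all eigenvalues with strictly
negative real part), then any nonnegative differentiable `v` with
`v' t ≤ A (v t)` componentwise converges exponentially to the origin in the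
Euclidean (ℓ²) norm. -/
theorem metzler_hurwitz_exponential_convergence {m : ℕ}
    (A : Matrix (Fin m) (Fin m) ℝ)
    (hMetzler : ∀ i j, i ≠ j → 0 ≤ A i j)
    (hHurwitz : ∀ μ ∈ spectrum ℂ (A.map (Complex.ofReal ·)), μ.re < 0)
    (v v' : ℝ → Fin m → ℝ)
    (hv : ∀ t ≥ (0 : ℝ), HasDerivAt v (v' t) t)
    (hpos : ∀ t ≥ (0 : ℝ), ∀ i, 0 ≤ v t i)
    (hcomp : ∀ t ≥ (0 : ℝ), ∀ i, v' t i ≤ A.mulVec (v t) i) :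
    ∃ b > (0 : ℝ), ∃ c > (0 : ℝ), ∀ t ≥ (0 : ℝ),
      Real.sqrt (∑ i, (v t i) ^ 2) ≤
        c * Real.exp (-b * t) * Real.sqrt (∑ i, (v 0 i) ^ 2) := by
  obtain ⟨w, hw1, γ, hγ, hwA⟩ := A.exists_one_le_vecMul_le_neg_smul hMetzler hHurwitz
  have hw : 0 ≤ w := fun i => zero_le_one.trans (hw1 i)
  -- the `+ 1` keeps `c > 0` when `m = 0`
  refine ⟨γ, hγ, √(∑ i, w i ^ 2) + 1, by positivity, fun t ht => ?_⟩
  calc √(∑ i, v t i ^ 2) ≤ ∑ i, v t i := Real.sqrt_sum_sq_le_sum _ fun i _ => hpos t ht i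
    _ ≤ w ⬝ᵥ v t := Finset.sum_le_sum fun i _ => le_mul_of_one_le_left (hpos t ht i) (hw1 i)
    _ ≤ w ⬝ᵥ v 0 * Real.exp (-γ * t) :=
      dotProduct_le_mul_exp_of_vecMul_le_neg_smul hw hwA hv hpos hcomp ht
    _ ≤ √(∑ i, w i ^ 2) * √(∑ i, v 0 i ^ 2) * Real.exp (-γ * t) := by
      gcongr
      exact Real.sum_mul_le_sqrt_mul_sqrt _ _ _
    _ ≤ (√(∑ i, w i ^ 2) + 1) * Real.exp (-γ * t) * √(∑ i, v 0 i ^ 2) := by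
      rw [mul_right_comm]
      gcongr
      linarith
end

section
/- Let D ⊆ ℝ^n be an open set containing 0, let f : ℝ^n → ℝ^n be continuous with f(0) = 0, and let V : ℝ^n → ℝ be continuously differentiable on D with V(0) = 0, V(x) > 0 for all x ∈ D \ {0}, and ∇V(x)·f(x) ≤ 0 for all x ∈ D. Then the origin is stable in the sense of Lyapunov: for every ε > 0 there exists δ > 0 such that every differentiable function x : [0,∞) → ℝ^n satisfying x'(t) = f(x(t)) for all t ≥ 0 and ‖x(0)‖₂ < δ satisfies ‖x(t)‖₂ < ε for all t ≥ 0. -/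
/-!
Fix `r > 0` with the closed ball of radius `r` inside `D`. By compactness `V` has a positive
lower bound `m` on the sphere of radius `r`, and by continuity `V < m` on a small ball around `0`.
A solution starting in that ball which ever left the ball of radius `r` would meet the sphere at a
first time `T`; on `[0, T]` it stays in `D`, where `V` decreases along solutions, so
`m ≤ V (x T) ≤ V (x 0) < m`.
-/

open Set Metric

theorem ContinuousOn.exists_first_eq_of_lt_of_le {g : ℝ → ℝ} {a b c : ℝ} (hab : a ≤ b)
    (hg : ContinuousOn g (Icc a b)) (ha : g a < c) (hb : c ≤ g b) :
    ∃ T ∈ Ioc a b, g T = c ∧ ∀ s ∈ Icc a T, g s ≤ c := by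
  set K := Icc a b ∩ g ⁻¹' Ici c
  have hK : IsClosed K := hg.preimage_isClosed_of_isClosed isClosed_Icc isClosed_Ici
  have hbK : b ∈ K := ⟨right_mem_Icc.2 hab, hb⟩
  have hTK : sInf K ∈ K := hK.csInf_mem ⟨b, hbK⟩ ⟨a, fun s hs => hs.1.1⟩
  set T := sInf K
  have hbelow : ∀ s ∈ Ico a T, g s < c := fun s hs => not_le.1 fun hcs =>
    hs.2.not_ge (csInf_le ⟨a, fun u hu => hu.1.1⟩ ⟨⟨hs.1, hs.2.le.trans hTK.1.2⟩, hcs⟩)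
  have haT : a < T := hTK.1.1.lt_of_ne fun h => (h ▸ ha).not_ge hTK.2
  have hgT : g T ≤ c := by
    have hcont : ContinuousWithinAt g (Ico a T) T :=
      (hg T hTK.1).mono (Ico_subset_Icc_self.trans (Icc_subset_Icc_right hTK.1.2))
    exact hcont.closure_le (by rw [closure_Ico haT.ne]; exact right_mem_Icc.2 haT.le)
      continuousWithinAt_const fun s hs => (hbelow s hs).le
  refine ⟨T, ⟨haT, hTK.1.2⟩, hgT.antisymm hTK.2, fun s hs => ?_⟩
  rcases hs.2.lt_or_eq with hsT | rfl
  exacts [(hbelow s ⟨hs.1, hsT⟩).le, hgT]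

variable {E : Type*} [NormedAddCommGroup E] [NormedSpace ℝ E]

theorem antitoneOn_comp_of_fderiv_apply_nonpos {D : Set E} (hD : IsOpen D) {f : E → E}
    {V : E → ℝ} (hV : DifferentiableOn ℝ V D) (hVdec : ∀ y ∈ D, fderiv ℝ V y (f y) ≤ 0)
    {x : ℝ → E} {a b : ℝ} (hx : ∀ t ∈ Icc a b, HasDerivAt x (f (x t)) t)
    (hxD : ∀ t ∈ Icc a b, x t ∈ D) : AntitoneOn (V ∘ x) (Icc a b) := by
  have hderiv : ∀ t ∈ Icc a b, HasDerivAt (V ∘ x) (fderiv ℝ V (x t) (f (x t))) t :=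
    fun t ht => ((hV.differentiableAt (hD.mem_nhds (hxD t ht))).hasFDerivAt).comp_hasDerivAt t
      (hx t ht)
  refine antitoneOn_of_deriv_nonpos (convex_Icc a b)
    (fun t ht => (hderiv t ht).continuousAt.continuousWithinAt) (fun t ht => ?_) fun t ht => ?_
  all_goals rw [interior_Icc] at ht
  · exact (hderiv t (Ioo_subset_Icc_self ht)).differentiableAt.differentiableWithinAt
  · rw [(hderiv t (Ioo_subset_Icc_self ht)).deriv]
    exact hVdec _ (hxD t (Ioo_subset_Icc_self ht))

theorem exists_pos_forall_norm_lt_of_lyapunov [ProperSpace E] {D : Set E} (hD : IsOpen D)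
    {f : E → E} {V : E → ℝ} (hV : DifferentiableOn ℝ V D) (hV0 : V 0 = 0)
    (hVpos : ∀ y ∈ D, y ≠ 0 → 0 < V y) (hVdec : ∀ y ∈ D, fderiv ℝ V y (f y) ≤ 0)
    {r : ℝ} (hr : 0 < r) (hrD : closedBall (0 : E) r ⊆ D) :
    ∃ δ > 0, ∀ x : ℝ → E, (∀ t ≥ 0, HasDerivAt x (f (x t)) t) →
      ‖x 0‖ < δ → ∀ t ≥ 0, ‖x t‖ < r := by
  have hVcont : ContinuousOn V D := hV.continuousOn
  obtain ⟨m, hm, hmV⟩ : ∃ m > 0, ∀ y ∈ sphere (0 : E) r, m ≤ V y :=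
    (isCompact_sphere 0 r).exists_forall_le' (hVcont.mono (sphere_subset_closedBall.trans hrD))
      fun y hy => hVpos y (hrD (sphere_subset_closedBall hy)) (ne_of_mem_sphere hy hr.ne')
  obtain ⟨δ, hδ, hVδ⟩ : ∃ δ > 0, ∀ y ∈ ball (0 : E) δ, V y < m := by
    have : ∀ᶠ y in nhds (0 : E), V y < m :=
      (hVcont.continuousAt (hD.mem_nhds (hrD (mem_closedBall_self hr.le)))).eventually
        (gt_mem_nhds (hV0 ▸ hm))
    simpa using eventually_nhds_iff_ball.1 this
  refine ⟨min δ r, lt_min hδ hr, fun x hx hx0 t₁ ht₁ => not_le.1 fun hrt₁ => ?_⟩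
  obtain ⟨T, hT, hxT, hxle⟩ := ContinuousOn.exists_first_eq_of_lt_of_le (g := fun t => ‖x t‖)
    ht₁ (fun t ht => (hx t ht.1).continuousAt.continuousWithinAt.norm)
    (hx0.trans_le (min_le_right _ _)) hrt₁
  have hxD : ∀ s ∈ Icc 0 T, x s ∈ D := fun s hs => hrD (mem_closedBall_zero_iff.2 (hxle s hs))
  have hanti := antitoneOn_comp_of_fderiv_apply_nonpos hD hV hVdec (fun s hs => hx s hs.1) hxD
  have hdecr : V (x T) ≤ V (x 0) :=
    hanti (left_mem_Icc.2 hT.1.le) (right_mem_Icc.2 hT.1.le) hT.1.le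
  have hstart : V (x 0) < m := hVδ _ (mem_ball_zero_iff.2 (hx0.trans_le (min_le_left _ _)))
  have hsphere : m ≤ V (x T) := hmV _ (mem_sphere_zero_iff_norm.2 hxT)
  linarith

theorem lyapunov_stability_general {n : ℕ} (D : Set (EuclideanSpace ℝ (Fin n)))
    (hD : IsOpen D) (h0D : (0 : EuclideanSpace ℝ (Fin n)) ∈ D)
    (f : EuclideanSpace ℝ (Fin n) → EuclideanSpace ℝ (Fin n))
    (V : EuclideanSpace ℝ (Fin n) → ℝ)
    (hV : ContDiffOn ℝ 1 V D)
    (hV0 : V 0 = 0)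
    (hVpos : ∀ x ∈ D, x ≠ 0 → 0 < V x)
    (hVdec : ∀ x ∈ D, fderiv ℝ V x (f x) ≤ 0) :
    ∀ ε > (0 : ℝ), ∃ δ > (0 : ℝ),
      ∀ x : ℝ → EuclideanSpace ℝ (Fin n),
        (∀ t ≥ (0 : ℝ), HasDerivAt x (f (x t)) t) →
        ‖x 0‖ < δ → ∀ t ≥ (0 : ℝ), ‖x t‖ < ε := by
  intro ε hε
  obtain ⟨r₀, hr₀, hr₀D⟩ := nhds_basis_closedBall.mem_iff.1 (hD.mem_nhds h0D)
  set r := min r₀ (ε / 2)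
  have hr : 0 < r := lt_min hr₀ (half_pos hε)
  obtain ⟨δ, hδ, hstay⟩ := exists_pos_forall_norm_lt_of_lyapunov hD
    (hV.differentiableOn one_ne_zero) hV0 hVpos hVdec hr
    ((closedBall_subset_closedBall (min_le_left _ _)).trans hr₀D)
  exact ⟨δ, hδ, fun x hx hx0 t ht =>
    (hstay x hx hx0 t ht).trans ((min_le_right _ _).trans_lt (half_lt_self hε))⟩

/-- **Lyapunov's direct method, stability part** (Theorem 1(1) of the paper).
If `V` is continuously differentiable on an open set `D ∋ 0`, positive
definite on `D`, and its derivative along the continuous vector field `f`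
(with `f 0 = 0`) is nonpositive on `D`, then the origin is stable in the sense
of Lyapunov: for every `ε > 0` there is `δ > 0` such that every solution of
`x' = f (x)` starting with `‖x 0‖ < δ` satisfies `‖x t‖ < ε` for all `t ≥ 0`. -/
theorem lyapunov_stability {n : ℕ} (D : Set (EuclideanSpace ℝ (Fin n)))
    (hD : IsOpen D) (h0D : (0 : EuclideanSpace ℝ (Fin n)) ∈ D)
    (f : EuclideanSpace ℝ (Fin n) → EuclideanSpace ℝ (Fin n))
    (hf : Continuous f) (hf0 : f 0 = 0)
    (V : EuclideanSpace ℝ (Fin n) → ℝ)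
    (hV : ContDiffOn ℝ 1 V D)
    (hV0 : V 0 = 0)
    (hVpos : ∀ x ∈ D, x ≠ 0 → 0 < V x)
    (hVdec : ∀ x ∈ D, fderiv ℝ V x (f x) ≤ 0) :
    ∀ ε > (0 : ℝ), ∃ δ > (0 : ℝ),
      ∀ x : ℝ → EuclideanSpace ℝ (Fin n),
        (∀ t ≥ (0 : ℝ), HasDerivAt x (f (x t)) t) →
        ‖x 0‖ < δ → ∀ t ≥ (0 : ℝ), ‖x t‖ < ε :=
  lyapunov_stability_general D hD h0D f V hV hV0 hVpos hVdec
end
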